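/- arXiv:2005.12512 — 5 statements merged into one kernel-verified Lean document; each statement's English description precedes it below -/
import Mathlib

section
/- The only solutions in positive integers (x, y) with x > 0 and y ≥ 1 of the Diophantine equation 7x² + 1 = 2^(y+2) are (x, y) = (1, 1) and (x, y) = (3, 4). -/
lemma nat_sq_of_coprime {a b c : ℕ} (h : Nat.Coprime a b) (heq : a * b = c ^ 2) :
    ∃ d, a = d ^ 2 :=
  exists_eq_pow_of_mul_eq_pow (by rw [Nat.isUnit_iff]; exact h) heq

lemma split7 {a b x : ℕ} (hco : Nat.Coprime a b) (hprod : a * b = 7 * x ^ 2)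
    (h7 : 7 ∣ a) : (∃ u, a = 7 * u ^ 2) ∧ (∃ v, b = v ^ 2) := by
  obtain ⟨d, rfl⟩ := h7
  have hdb : d * b = x ^ 2 := by
    have := hprod
    rw [mul_assoc] at this
    omega
  have hcodb : Nat.Coprime d b := Nat.Coprime.coprime_dvd_left ⟨7, by ring⟩ hco
  obtain ⟨u, hu⟩ := nat_sq_of_coprime hcodb hdb
  obtain ⟨v, hv⟩ := nat_sq_of_coprime hcodb.symm (by rw [mul_comm]; exact hdb)
  exact ⟨⟨u, by rw [hu]⟩, ⟨v, hv⟩⟩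

lemma pow2_mod7 (n : ℕ) : 2 ^ n % 7 = 2 ^ (n % 3) % 7 := by
  conv_lhs => rw [← Nat.div_add_mod n 3]
  rw [pow_add, pow_mul, Nat.mul_mod, Nat.pow_mod]
  norm_num

lemma pow2_mod3_odd {m : ℕ} (hm : Odd m) : 2 ^ m % 3 = 2 := by
  obtain ⟨s, rfl⟩ := hm
  rw [pow_add, pow_mul, Nat.mul_mod, Nat.pow_mod]
  norm_num

lemma cube_fact {P : ℕ} (h : 1 ≤ P) : (P - 1) * (P ^ 2 + P + 1) + 1 = P ^ 3 := by
  obtain ⟨q, rfl⟩ : ∃ q, P = q + 1 := ⟨P - 1, by omega⟩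
  simp only [Nat.add_sub_cancel]
  ring

lemma sq_fact {c : ℕ} (h : 1 ≤ c) : (c - 1) * (c + 1) + 1 = c ^ 2 := by
  obtain ⟨q, rfl⟩ : ∃ q, c = q + 1 := ⟨c - 1, by omega⟩
  simp only [Nat.add_sub_cancel]
  ring

-- key even-case lemma: v^2 = 2^K + 1 with K ≥ 1 forces v = 3, K = 3
lemma sq_eq_pow2_add_one {v K : ℕ} (hK : 1 ≤ K) (h : v ^ 2 = 2 ^ K + 1) :
    v = 3 ∧ K = 3 := by
  have hv2 : 2 ≤ v := by nlinarith [Nat.one_le_two_pow (n := K)]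
  obtain ⟨w, rfl⟩ : ∃ w, v = 2 * w + 1 := by
    rcases Nat.even_or_odd v with ⟨w, rfl⟩ | ⟨w, rfl⟩
    · exfalso
      have h2 : 2 ∣ 2 ^ K := dvd_pow_self 2 (by omega)
      have : (w + w) ^ 2 = 2 * (2 * w ^ 2) := by ring
      omega
    · exact ⟨w, by ring⟩
  have hw1 : 1 ≤ w := by nlinarith
  have hK3 : 3 ≤ K := by
    by_contra hc
    interval_cases K <;> nlinarith
  have hww : w * (w + 1) = 2 ^ (K - 2) := by
    have e1 : 2 ^ K = 4 * 2 ^ (K - 2) := by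
      have : (4:ℕ) = 2 ^ 2 := by norm_num
      rw [this, ← pow_add]
      congr 1
      omega
    nlinarith
  -- w and w+1 are both powers of 2
  obtain ⟨i, hi, rfl⟩ := (Nat.dvd_prime_pow Nat.prime_two).mp ⟨w + 1, hww.symm⟩
  have hwp1 : 2 ^ i + 1 ∣ 2 ^ (K - 2) := ⟨2 ^ i, by rw [← hww]; ring⟩
  obtain ⟨j, hj, hje⟩ := (Nat.dvd_prime_pow Nat.prime_two).mp hwp1
  have hi0 : i = 0 := by
    rcases Nat.eq_zero_or_pos i with h0 | hpos
    · exact h0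
    exfalso
    obtain ⟨a, ha⟩ : 2 ∣ 2 ^ i := dvd_pow_self 2 (by omega)
    rcases Nat.eq_zero_or_pos j with hj0 | hjpos
    · rw [hj0, pow_zero] at hje
      have := Nat.one_le_two_pow (n := i)
      omega
    obtain ⟨b, hb⟩ : 2 ∣ 2 ^ j := dvd_pow_self 2 (by omega)
    rw [ha, hb] at hje
    omega
  subst hi0
  rw [pow_zero] at hww
  have hK2 : K - 2 = 1 := by
    have h2 : (2:ℕ) ^ (K - 2) = 2 ^ 1 := by rw [← hww]; norm_num
    exact Nat.pow_right_injective (le_refl 2) h2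
  constructor <;> omega

lemma fact2 {P : ℕ} (h : 1 ≤ P) : P ^ 2 + P + 1 = (P + 2) * (P - 1) + 3 := by
  obtain ⟨q, rfl⟩ : ∃ q, P = q + 1 := ⟨P - 1, by omega⟩
  simp only [Nat.add_sub_cancel]
  ring

/-- The only solutions in positive integers `(x, y)` of `7x² + 1 = 2^(y+2)`
are `(1, 1)` and `(3, 4)`. -/
theorem stmt_0 (x y : ℕ) (hx : 0 < x) (hy : 1 ≤ y) :
    7 * x ^ 2 + 1 = 2 ^ (y + 2) ↔ (x = 1 ∧ y = 1) ∨ (x = 3 ∧ y = 4) := by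
  constructor
  · intro h
    have h7m : 2 ^ (y + 2) % 7 = 1 := by omega
    have h3 : (y + 2) % 3 = 0 := by
      rw [pow2_mod7] at h7m
      have hlt : (y + 2) % 3 < 3 := Nat.mod_lt _ (by norm_num)
      interval_cases h' : (y + 2) % 3 <;> simp_all
    obtain ⟨m, hm⟩ : ∃ m, y + 2 = 3 * m := ⟨(y + 2) / 3, by omega⟩
    have hm1 : 1 ≤ m := by omega
    have hP2 : 2 ≤ 2 ^ m := by
      calc 2 = 2 ^ 1 := by norm_num
      _ ≤ 2 ^ m := Nat.pow_le_pow_right (by norm_num) hm1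
    have hPy : 2 ^ (y + 2) = (2 ^ m) ^ 3 := by rw [hm, ← pow_mul, mul_comm]
    have hprod : (2 ^ m - 1) * ((2 ^ m) ^ 2 + 2 ^ m + 1) = 7 * x ^ 2 := by
      have h2 := h
      rw [hPy] at h2
      have h3' := cube_fact (P := 2 ^ m) (by omega)
      omega
    rcases Nat.even_or_odd m with hpar | hpar
    · -- even case: m = 2t, y + 2 = 6t
      obtain ⟨t, rfl⟩ := hpar
      have ht1 : 1 ≤ t := by omega
      have hc8 : 8 ≤ 2 ^ (3 * t) := by
        calc 8 = 2 ^ 3 := by norm_num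
        _ ≤ 2 ^ (3 * t) := Nat.pow_le_pow_right (by norm_num) (by omega)
      have hcsq : 2 ^ (y + 2) = (2 ^ (3 * t)) ^ 2 := by
        rw [hm, ← pow_mul]; ring_nf
      have hprod2 : (2 ^ (3 * t) - 1) * (2 ^ (3 * t) + 1) = 7 * x ^ 2 := by
        have h2 := h
        rw [hcsq] at h2
        have h3' := sq_fact (c := 2 ^ (3 * t)) (by omega)
        omega
      have hceven : (2 : ℕ) ∣ 2 ^ (3 * t) := dvd_pow_self 2 (by omega)
      obtain ⟨k2, hk2⟩ := hceven
      have hco : Nat.Coprime (2 ^ (3 * t) - 1) (2 ^ (3 * t) + 1) := by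
        have hsub : (2 ^ (3 * t) + 1) - (2 ^ (3 * t) - 1) = 2 := by omega
        have hg2 : Nat.gcd (2 ^ (3 * t) - 1) (2 ^ (3 * t) + 1) ∣ 2 := by
          have hd := Nat.dvd_sub (Nat.gcd_dvd_right (2 ^ (3 * t) - 1) (2 ^ (3 * t) + 1))
            (Nat.gcd_dvd_left (2 ^ (3 * t) - 1) (2 ^ (3 * t) + 1))
          rwa [hsub] at hd
        rcases (Nat.dvd_prime Nat.prime_two).mp hg2 with h1 | h2
        · exact h1
        · exfalso
          obtain ⟨e, he⟩ : (2:ℕ) ∣ 2 ^ (3 * t) - 1 := by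
            have hgl := Nat.gcd_dvd_left (2 ^ (3 * t) - 1) (2 ^ (3 * t) + 1)
            rw [h2] at hgl; exact hgl
          omega
      have h7c : (7 : ℕ) ∣ 2 ^ (3 * t) - 1 := by
        have : 2 ^ (3 * t) % 7 = 1 := by
          rw [pow_mul, Nat.pow_mod]; norm_num
        omega
      obtain ⟨-, v, hv⟩ := split7 hco hprod2 h7c
      have hvK := sq_eq_pow2_add_one (v := v) (K := 3 * t) (by omega) (by omega)
      have ht : t = 1 := by omega
      subst ht
      have hy4 : y = 4 := by omega
      subst hy4
      have hx9 : x ^ 2 = 9 := by norm_num at h; omega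
      have hxle : x ≤ 3 := by nlinarith
      have hxge : 3 ≤ x := by nlinarith
      right; omega
    · -- odd case
      have hA3 : (2 ^ m - 1) % 3 = 1 := by
        have := pow2_mod3_odd hpar
        omega
      have hco : Nat.Coprime (2 ^ m - 1) ((2 ^ m) ^ 2 + 2 ^ m + 1) := by
        have hgA := Nat.gcd_dvd_left (2 ^ m - 1) ((2 ^ m) ^ 2 + 2 ^ m + 1)
        have hgB := Nat.gcd_dvd_right (2 ^ m - 1) ((2 ^ m) ^ 2 + 2 ^ m + 1)
        have hB' : (2 ^ m) ^ 2 + 2 ^ m + 1 = (2 ^ m + 2) * (2 ^ m - 1) + 3 :=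
          fact2 (by omega)
        have hmul : Nat.gcd (2 ^ m - 1) ((2 ^ m) ^ 2 + 2 ^ m + 1) ∣
            (2 ^ m + 2) * (2 ^ m - 1) := hgA.mul_left _
        have hsub3 : ((2 ^ m) ^ 2 + 2 ^ m + 1) - (2 ^ m + 2) * (2 ^ m - 1) = 3 := by
          rw [hB']
          generalize (2 ^ m + 2) * (2 ^ m - 1) = X
          omega
        have hg3 : Nat.gcd (2 ^ m - 1) ((2 ^ m) ^ 2 + 2 ^ m + 1) ∣ 3 := by
          have hd := Nat.dvd_sub hgB hmul
          rwa [hsub3] at hd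
        rcases (Nat.dvd_prime (by norm_num : Nat.Prime 3)).mp hg3 with h1 | h2
        · exact h1
        · exfalso
          obtain ⟨e, he⟩ : (3:ℕ) ∣ 2 ^ m - 1 := by rw [h2] at hgA; exact hgA
          omega
      have h7AB : (7:ℕ) ∣ (2 ^ m - 1) * ((2 ^ m) ^ 2 + 2 ^ m + 1) := ⟨x ^ 2, hprod⟩
      rcases (Nat.Prime.dvd_mul (by norm_num)).mp h7AB with h7A | h7B
      · -- 7 ∣ 2^m - 1 : second factor is a square, impossible
        exfalso
        obtain ⟨-, v, hv⟩ := split7 hco hprod h7A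
        have h1 : 2 ^ m < v := by
          by_contra hc
          push_neg at hc
          have := Nat.pow_le_pow_left hc 2
          nlinarith
        have h2 := Nat.pow_le_pow_left (show 2 ^ m + 1 ≤ v by omega) 2
        nlinarith
      · -- 7 ∣ second factor : 2^m - 1 is a square
        have hprod' : ((2 ^ m) ^ 2 + 2 ^ m + 1) * (2 ^ m - 1) = 7 * x ^ 2 := by
          rw [mul_comm]; exact hprod
        obtain ⟨-, v, hv⟩ := split7 hco.symm hprod' h7B
        obtain ⟨s, rfl⟩ := hpar
        rcases Nat.eq_zero_or_pos s with hs | hs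
        · -- m = 1
          subst hs
          have hy1 : y = 1 := by omega
          subst hy1
          have hx1 : x ^ 2 = 1 := by norm_num at h; omega
          have hxle : x ≤ 1 := by nlinarith
          left; omega
        · -- m ≥ 3 : 2^m - 1 ≡ 3 mod 4, not a square
          exfalso
          have h4 : (4:ℕ) ∣ 2 ^ (2 * s + 1) := by
            have : (2:ℕ) ^ 2 ∣ 2 ^ (2 * s + 1) := pow_dvd_pow 2 (by omega)
            simpa using this
          obtain ⟨k, hk⟩ := h4
          have h1 : 1 ≤ 2 ^ (2 * s + 1) := Nat.one_le_two_pow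
          rcases Nat.even_or_odd v with ⟨w, rfl⟩ | ⟨w, rfl⟩
          · obtain ⟨W, hW⟩ : ∃ W, W = w * w := ⟨_, rfl⟩
            have e : (w + w) ^ 2 = 4 * W := by rw [hW]; ring
            rw [e] at hv
            generalize 2 ^ (2 * s + 1) = A at hk hv h1
            omega
          · obtain ⟨W, hW⟩ : ∃ W, W = w * w := ⟨_, rfl⟩
            have e : (2 * w + 1) ^ 2 = 4 * W + 4 * w + 1 := by rw [hW]; ring
            rw [e] at hv
            generalize 2 ^ (2 * s + 1) = A at hk hv h1
            omega
  · rintro (⟨rfl, rfl⟩ | ⟨rfl, rfl⟩) <;> norm_num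
end

section
/- Let ℓ be an odd prime, d ≡ 3 (mod 4) a positive integer, and a, c odd positive integers. Suppose (a + c√(-d))/2 = ((u + v√(-d))/2)^ℓ for integers u, v of the same parity. Then u and v are both odd, and u divides 2^(ℓ-1)·a. -/
/-- re of odd power of purely imaginary Zsqrtd element is 0. -/
lemma aux_pow_re_zero {D v : ℤ} (k : ℕ) :
    (((⟨0, v⟩ : ℤ√D)) ^ (2 * k + 1)).re = 0 := by
  induction k with
  | zero => simp [Zsqrtd.re_mul]
  | succ n ih =>
      have h1 : 2 * (n + 1) + 1 = (2 * n + 1) + 2 := by ring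
      have h2im : (((⟨0, v⟩ : ℤ√D)) ^ 2).im = 0 := by
        simp [pow_two, Zsqrtd.im_mul]
      rw [h1, pow_add, Zsqrtd.re_mul, ih, h2im]
      ring

lemma aux_dvd {D u v : ℤ} (n : ℕ) :
    u ∣ ((⟨u, v⟩ : ℤ√D) ^ n).re - (((⟨0, v⟩ : ℤ√D)) ^ n).re ∧
    u ∣ ((⟨u, v⟩ : ℤ√D) ^ n).im - (((⟨0, v⟩ : ℤ√D)) ^ n).im := by
  induction n with
  | zero => simp
  | succ n ih =>
      obtain ⟨h1, h2⟩ := ih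
      constructor <;> rw [pow_succ, pow_succ] <;>
        simp only [Zsqrtd.re_mul, Zsqrtd.im_mul]
      · have e : ((⟨u, v⟩ : ℤ√D) ^ n).re * u + D * ((⟨u, v⟩ : ℤ√D) ^ n).im * v -
            ((((⟨0, v⟩ : ℤ√D)) ^ n).re * 0 + D * (((⟨0, v⟩ : ℤ√D)) ^ n).im * v)
            = ((⟨u, v⟩ : ℤ√D) ^ n).re * u +
              D * v * (((⟨u, v⟩ : ℤ√D) ^ n).im - (((⟨0, v⟩ : ℤ√D)) ^ n).im) := by ring
        rw [e]
        exact dvd_add (dvd_mul_left u _) (Dvd.dvd.mul_left h2 _)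
      · have e : ((⟨u, v⟩ : ℤ√D) ^ n).re * v + ((⟨u, v⟩ : ℤ√D) ^ n).im * u -
            ((((⟨0, v⟩ : ℤ√D)) ^ n).re * v + (((⟨0, v⟩ : ℤ√D)) ^ n).im * 0)
            = v * (((⟨u, v⟩ : ℤ√D) ^ n).re - (((⟨0, v⟩ : ℤ√D)) ^ n).re) +
              ((⟨u, v⟩ : ℤ√D) ^ n).im * u := by ring
        rw [e]
        exact dvd_add (Dvd.dvd.mul_left h1 _) (dvd_mul_left u _)

open Complex in
/-- Let `ℓ` be an odd prime, `d ≡ 3 (mod 4)` a positive integer, `a`, `c` odd positive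
integers. If `(a + c√(-d))/2 = ((u + v√(-d))/2)^ℓ` for integers `u`, `v` of the same
parity, then `u` and `v` are both odd and `u ∣ 2^(ℓ-1)·a`. -/
theorem stmt_8 (ℓ : ℕ) (hℓ : ℓ.Prime) (hℓodd : Odd ℓ) (d a c : ℕ)
    (hd0 : 0 < d) (hd : d % 4 = 3) (ha0 : 0 < a) (ha : Odd a) (hc0 : 0 < c) (hc : Odd c)
    (u v : ℤ) (hpar : u % 2 = v % 2)
    (h : ((a : ℂ) + (c : ℂ) * Real.sqrt d * Complex.I) / 2
        = (((u : ℂ) + (v : ℂ) * Real.sqrt d * Complex.I) / 2) ^ ℓ) :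
    Odd u ∧ Odd v ∧ u ∣ 2 ^ (ℓ - 1) * (a : ℤ) := by
  set D : ℤ := -(d : ℤ) with hD
  have hsd : (0:ℝ) < Real.sqrt d := Real.sqrt_pos.2 (by positivity)
  have hℓ1 : ℓ - 1 + 1 = ℓ := Nat.succ_pred_eq_of_pos hℓ.pos
  have hsq : ((Real.sqrt d : ℂ) * Complex.I) * ((Real.sqrt d : ℂ) * Complex.I)
      = ((D : ℤ) : ℂ) := by
    have h1 : (Real.sqrt d : ℝ) * Real.sqrt d = d := Real.mul_self_sqrt (by positivity)
    have h2 : ((Real.sqrt d : ℂ)) * (Real.sqrt d : ℂ) = (d : ℂ) := by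
      rw [← Complex.ofReal_mul, h1]; push_cast; ring
    rw [mul_mul_mul_comm, h2, Complex.I_mul_I, hD]
    push_cast; ring
  set f : ℤ√D →+* ℂ := Zsqrtd.lift ⟨(Real.sqrt d : ℂ) * Complex.I, hsq⟩ with hf
  have hfapp : ∀ x : ℤ√D, f x = (x.re : ℂ) + (x.im : ℂ) * ((Real.sqrt d : ℂ) * Complex.I) :=
    fun x => rfl
  have hinj : Function.Injective f := by
    intro x y hxy
    rw [hfapp, hfapp] at hxy
    have hre := congrArg Complex.re hxy
    have him := congrArg Complex.im hxy
    simp only [Complex.add_re, Complex.add_im, Complex.intCast_re, Complex.intCast_im,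
      Complex.mul_re, Complex.mul_im, Complex.I_re, Complex.I_im, Complex.ofReal_re,
      Complex.ofReal_im] at hre him
    ring_nf at hre him
    have hre' : (x.re : ℝ) = y.re := by linarith
    have him' : (x.im : ℝ) = y.im := by
      nlinarith [hsd, sq_nonneg ((x.im : ℝ) - y.im)]
    exact Zsqrtd.ext (by exact_mod_cast hre') (by exact_mod_cast him')
  set w : ℤ√D := ⟨u, v⟩ with hw
  -- the main complex identity, cleared of denominators
  have hmain : ((a : ℂ) + (c : ℂ) * Real.sqrt d * Complex.I) * 2 ^ (ℓ - 1)
      = ((u : ℂ) + (v : ℂ) * Real.sqrt d * Complex.I) ^ ℓ := by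
    rw [div_pow, div_eq_div_iff (by norm_num) (pow_ne_zero _ (by norm_num : (2:ℂ) ≠ 0))] at h
    rw [show (2:ℂ) ^ ℓ = 2 ^ (ℓ - 1) * 2 by rw [← pow_succ, hℓ1]] at h
    linear_combination h / 2
  have key : (((2 : ℤ) ^ (ℓ - 1) : ℤ) : ℤ√D) * ⟨(a : ℤ), (c : ℤ)⟩ = w ^ ℓ := by
    apply hinj
    rw [map_mul, map_pow]
    have h2 : f (((2 : ℤ) ^ (ℓ - 1) : ℤ) : ℤ√D) = (2 : ℂ) ^ (ℓ - 1) := by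
      rw [map_intCast]; push_cast; ring
    rw [h2, hfapp, hfapp]
    simp only [hw]
    push_cast
    linear_combination hmain
  -- component equations
  have hre : 2 ^ (ℓ - 1) * (a : ℤ) = (w ^ ℓ).re := by
    have := congrArg Zsqrtd.re key
    rw [Zsqrtd.re_mul, Zsqrtd.re_intCast, Zsqrtd.im_intCast] at this
    simpa using this
  -- parity of u
  have hodd_u : Odd u := by
    rw [Int.odd_iff]
    by_contra h2
    have hu2 : u % 2 = 0 := by omega
    have hv2 : v % 2 = 0 := by omega
    obtain ⟨u', hu'⟩ : (2:ℤ) ∣ u := Int.dvd_of_emod_eq_zero hu2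
    obtain ⟨v', hv'⟩ : (2:ℤ) ∣ v := Int.dvd_of_emod_eq_zero hv2
    have hw2 : w = (((2:ℤ)) : ℤ√D) * ⟨u', v'⟩ := by
      apply Zsqrtd.ext <;>
        simp [hw, Zsqrtd.re_mul, Zsqrtd.im_mul, Zsqrtd.re_intCast, Zsqrtd.im_intCast, hu', hv']
    have hXre : (w ^ ℓ).re = 2 ^ ℓ * ((⟨u', v'⟩ : ℤ√D) ^ ℓ).re := by
      rw [hw2, mul_pow, ← Int.cast_pow, Zsqrtd.re_mul, Zsqrtd.re_intCast, Zsqrtd.im_intCast]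
      ring
    rw [hXre, show (2:ℤ) ^ ℓ = 2 ^ (ℓ - 1) * 2 by rw [← pow_succ, hℓ1], mul_assoc] at hre
    have ha2 : (a : ℤ) = 2 * ((⟨u', v'⟩ : ℤ√D) ^ ℓ).re := by
      exact mul_left_cancel₀ (pow_ne_zero _ (by norm_num : (2:ℤ) ≠ 0)) hre
    have haodd : Odd (a : ℤ) := by exact_mod_cast ha
    rw [Int.odd_iff] at haodd
    omega
  have hodd_v : Odd v := by
    rw [Int.odd_iff] at hodd_u ⊢; omega
  refine ⟨hodd_u, hodd_v, ?_⟩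
  obtain ⟨k, hk⟩ := hℓodd
  have h0 : (((⟨0, v⟩ : ℤ√D)) ^ ℓ).re = 0 := by
    rw [hk]; exact aux_pow_re_zero k
  have hdvd := (aux_dvd (D := D) (u := u) (v := v) ℓ).1
  rw [h0, sub_zero] at hdvd
  rw [hre]
  exact hdvd
end

section
/- Let d, a be odd coprime positive integers and p a prime with gcd(a, p) = 1 and gcd(d, p) = 1. If (d, a²) = (7, 1) and p = 2, the equation d·x² + a² = 4·p^y has exactly the positive integer solutions (x, y) = (1, 1) and (3, 4); i.e., 7x² + 1 = 2^(y+2) has exactly these two solutions. -/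
/-!
Reducing `7x² + 1 = 2ⁿ` modulo 7 gives `n = 3k`, so `(t - 1)(t² + t + 1) = 7x²` with
`t = 2ᵏ`. For odd `k` the two factors are coprime, so the one not divisible by 7 is a
square: `t² + t + 1` lies strictly between `t²` and `(t + 1)²`, and `2ᵏ - 1` is a square only
for `k = 1`. For even `k = 2m` use instead `(2³ᵐ - 1)(2³ᵐ + 1) = 7x²` with coprime odd
factors: `2³ᵐ - 1` is not a square, and `2³ᵐ + 1 = b²` forces `b - 1` and `b + 1` to be
powers of two differing by 2, so `m = 1`.
-/

namespace Nat

theorem pow_mod_eq_pow_mod_mod {a m q : ℕ} (h : a ^ m % q = 1) (n : ℕ) :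
    a ^ n % q = a ^ (n % m) % q := by
  conv_lhs => rw [← Nat.div_add_mod n m, pow_add, pow_mul, Nat.mul_mod, Nat.pow_mod, h]
  simp

theorem isSquare_right_of_mul_eq_mul_sq {a b p x : ℕ} (hp : 0 < p) (hab : a.Coprime b)
    (h : a * b = p * x ^ 2) (hpa : p ∣ a) : IsSquare b := by
  obtain ⟨w, rfl⟩ := hpa
  have hwb : w * b = x ^ 2 := by
    apply Nat.eq_of_mul_eq_mul_left hp
    rw [← h, mul_assoc]
  have hunit : IsUnit (gcd b w) := Nat.isUnit_iff.mpr hab.coprime_mul_left.symm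
  obtain ⟨c, rfl⟩ := exists_eq_pow_of_mul_eq_pow hunit (mul_comm w b ▸ hwb)
  exact ⟨c, sq c⟩

theorem isSquare_or_isSquare_of_mul_eq_prime_mul_sq {a b p x : ℕ} (hp : p.Prime)
    (hab : a.Coprime b) (h : a * b = p * x ^ 2) : IsSquare a ∨ IsSquare b := by
  rcases hp.dvd_mul.mp ⟨x ^ 2, h⟩ with hpa | hpb
  · exact .inr (isSquare_right_of_mul_eq_mul_sq hp.pos hab h hpa)
  · exact .inl (isSquare_right_of_mul_eq_mul_sq hp.pos hab.symm (mul_comm a b ▸ h) hpb)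

theorem eq_one_of_two_pow_eq_two_pow_add_two {r s : ℕ} (h : 2 ^ r = 2 ^ s + 2) : s = 1 := by
  have hs := Nat.two_pow_pos s
  rcases r with _ | _ | r <;> rcases s with _ | _ | s <;> simp only [pow_succ, pow_zero] at h hs <;>
    omega

theorem le_one_of_two_pow_eq_sq_add_one {k b : ℕ} (h : 2 ^ k = b ^ 2 + 1) : k ≤ 1 := by
  by_contra! hk
  have h4 : ((2 ^ k : ℕ) : ZMod 4) = 0 :=
    (ZMod.natCast_eq_zero_iff _ 4).mpr (pow_dvd_pow 2 hk : 2 ^ 2 ∣ 2 ^ k)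
  have hsq : ∀ c : ZMod 4, c ^ 2 + 1 ≠ 0 := by decide
  exact hsq b (by simpa [h] using h4)

theorem eq_three_of_sq_eq_two_pow_add_one {b j : ℕ} (h : b ^ 2 = 2 ^ j + 1) : j = 3 := by
  obtain ⟨e, rfl⟩ : ∃ e, b = e + 1 := Nat.exists_eq_add_one.mpr (by
    rcases b with _ | b
    · simp at h
    · omega)
  have hfac : e * (e + 2) = 2 ^ j := by
    have : (e + 1) ^ 2 = e * (e + 2) + 1 := by ring
    omega
  obtain ⟨s, -, hs⟩ := (Nat.dvd_prime_pow Nat.prime_two).mp (Dvd.intro _ hfac)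
  obtain ⟨r, -, hr⟩ := (Nat.dvd_prime_pow Nat.prime_two).mp (Dvd.intro_left _ hfac)
  obtain rfl := eq_one_of_two_pow_eq_two_pow_add_two (hs ▸ hr).symm
  rw [hs] at hfac
  exact Nat.pow_right_injective le_rfl (by simpa using hfac.symm)

theorem three_dvd_of_seven_mul_sq_add_one_eq_two_pow {x n : ℕ} (h : 7 * x ^ 2 + 1 = 2 ^ n) :
    3 ∣ n := by
  have h7 : 2 ^ (n % 3) % 7 = 1 := by
    rw [← pow_mod_eq_pow_mod_mod (by norm_num : 2 ^ 3 % 7 = 1), ← h]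
    omega
  have := Nat.mod_lt n (by norm_num : 3 > 0)
  interval_cases hn : n % 3 <;> simp_all [Nat.dvd_iff_mod_eq_zero]

theorem eq_one_of_seven_mul_sq_add_one_eq_two_pow_three_mul {x k : ℕ} (hk : Odd k)
    (h : 7 * x ^ 2 + 1 = 2 ^ (3 * k)) : k = 1 ∧ x = 1 := by
  obtain ⟨u, hu⟩ : ∃ u, 2 ^ k = u + 1 :=
    ⟨2 ^ k - 1, (Nat.sub_add_cancel Nat.one_le_two_pow).symm⟩
  have hfac : u * (u ^ 2 + 3 * u + 3) = 7 * x ^ 2 := by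
    have : (u + 1) ^ 3 = u * (u ^ 2 + 3 * u + 3) + 1 := by ring
    rw [mul_comm 3 k, pow_mul, hu] at h
    omega
  have hu3 : ¬ 3 ∣ u := by
    have : 2 ^ k % 3 = 2 := by
      rw [pow_mod_eq_pow_mod_mod (by norm_num : 2 ^ 2 % 3 = 1), Nat.odd_iff.mp hk]
      rfl
    omega
  have hcop : u.Coprime (u ^ 2 + 3 * u + 3) := by
    rw [show u ^ 2 + 3 * u + 3 = 3 + (u + 3) * u by ring, coprime_add_mul_right_right,
      coprime_comm, Nat.prime_three.coprime_iff_not_dvd]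
    exact hu3
  rcases isSquare_or_isSquare_of_mul_eq_prime_mul_sq (by norm_num) hcop hfac with
    ⟨b, rfl⟩ | ⟨b, hb⟩
  · obtain rfl : k = 1 := by
      have := le_one_of_two_pow_eq_sq_add_one (by rw [hu, sq])
      have := hk.pos
      omega
    refine ⟨rfl, Nat.pow_left_injective two_ne_zero (?_ : x ^ 2 = 1 ^ 2)⟩
    omega
  · exact (Nat.not_exists_sq (m := u + 1) (by nlinarith) (by nlinarith) ⟨b, hb.symm⟩).elim

theorem eq_three_of_seven_mul_sq_add_one_eq_two_pow_six_mul {x m : ℕ} (hx : 0 < x)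
    (h : 7 * x ^ 2 + 1 = 2 ^ (6 * m)) : m = 1 ∧ x = 3 := by
  obtain ⟨c, hc⟩ : ∃ c, 2 ^ (3 * m) = c + 1 :=
    ⟨2 ^ (3 * m) - 1, (Nat.sub_add_cancel Nat.one_le_two_pow).symm⟩
  have hfac : c * (c + 2) = 7 * x ^ 2 := by
    have : (c + 1) ^ 2 = c * (c + 2) + 1 := by ring
    rw [show 6 * m = 3 * m * 2 by ring, pow_mul, hc] at h
    omega
  have hm : m ≠ 0 := by
    rintro rfl
    simp at h
    omega
  have hc_odd : Odd c := by
    have : Even (c + 1) := hc ▸ (Nat.even_pow.mpr ⟨even_two, by omega⟩)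
    exact Nat.not_even_iff_odd.mp (Nat.even_add_one.mp this)
  have hcop : c.Coprime (c + 2) := by
    rw [add_comm, coprime_add_self_right, coprime_two_right]
    exact hc_odd
  rcases isSquare_or_isSquare_of_mul_eq_prime_mul_sq (by norm_num) hcop hfac with
    ⟨b, rfl⟩ | ⟨b, hb⟩
  · have := le_one_of_two_pow_eq_sq_add_one (by rw [hc, sq])
    omega
  · obtain rfl : m = 1 := by
      have := eq_three_of_sq_eq_two_pow_add_one (by rw [sq, ← hb, hc] : b ^ 2 = 2 ^ (3 * m) + 1)
      omega
    refine ⟨rfl, Nat.pow_left_injective two_ne_zero (?_ : x ^ 2 = 3 ^ 2)⟩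
    omega

theorem seven_mul_sq_add_one_eq_two_pow_iff {x n : ℕ} (hx : 0 < x) :
    7 * x ^ 2 + 1 = 2 ^ n ↔ (x = 1 ∧ n = 3) ∨ (x = 3 ∧ n = 6) := by
  constructor
  · intro h
    obtain ⟨k, rfl⟩ := three_dvd_of_seven_mul_sq_add_one_eq_two_pow h
    rcases Nat.even_or_odd k with ⟨m, rfl⟩ | hk
    · rw [show 3 * (m + m) = 6 * m by ring] at h
      obtain ⟨rfl, rfl⟩ := eq_three_of_seven_mul_sq_add_one_eq_two_pow_six_mul hx h
      exact .inr ⟨rfl, rfl⟩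
    · obtain ⟨rfl, rfl⟩ := eq_one_of_seven_mul_sq_add_one_eq_two_pow_three_mul hk h
      exact .inl ⟨rfl, rfl⟩
  · rintro (⟨rfl, rfl⟩ | ⟨rfl, rfl⟩) <;> norm_num

end Nat

theorem stmt_11_general (d a p : ℕ) (hd7 : d = 7) (ha1 : a ^ 2 = 1) (hp2 : p = 2) :
    ∀ x y : ℕ, 0 < x → 0 < y →
      (d * x ^ 2 + a ^ 2 = 4 * p ^ y ↔ (x = 1 ∧ y = 1) ∨ (x = 3 ∧ y = 4)) := by
  subst hd7 hp2
  intro x y hx _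
  rw [ha1, show 4 * 2 ^ y = 2 ^ (y + 2) by ring, Nat.seven_mul_sq_add_one_eq_two_pow_iff hx]
  omega

/-- Exceptional case of Proposition 2.1: for `(d, a²) = (7, 1)` and `p = 2`, the equation
`d·x² + a² = 4·p^y` has exactly the positive integer solutions `(1, 1)` and `(3, 4)`. -/
theorem stmt_11 (d a p : ℕ) (hd : Odd d) (ha : Odd a) (hcop : Nat.Coprime d a)
    (hp : p.Prime) (hap : Nat.Coprime a p) (hdp : Nat.Coprime d p)
    (hd7 : d = 7) (ha1 : a ^ 2 = 1) (hp2 : p = 2) :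
    ∀ x y : ℕ, 0 < x → 0 < y →
      (d * x ^ 2 + a ^ 2 = 4 * p ^ y ↔ (x = 1 ∧ y = 1) ∨ (x = 3 ∧ y = 4)) :=
  stmt_11_general d a p hd7 ha1 hp2
end

section
/- Let a ≥ 1 be odd, p a prime with gcd(a, p) = 1, n > 1 odd, and a² - 4p^n = -c²d with d squarefree. Then the prime p splits in Q(√(-d)); in particular, the ideal (p) factors as a product of two distinct prime ideals in the ring of integers of Q(√(-d)). -/
/-!
The element `α = (a + c√-d)/2` is a root of `X² - aX + pⁿ`, whose discriminant `a² - 4pⁿ = -c²d`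
is odd, hence negative. So `α` and `β = a - α` are algebraic integers of norm `pⁿ`, hence
non-units, with `αβ = pⁿ` and `α + β = a` coprime to `p`. If `(p)` were a prime power `𝔭ᵉ`, unique
factorization of `(α)(β) = 𝔭ᵉⁿ` would put `α`, `β`, hence `a`, into `𝔭` along with `p`. As `(p)` has
norm `p²`, it must then be the product of two distinct primes.
-/

open NumberField Polynomial IntermediateField

section Quadratic

variable {F K : Type*} [Field F] [LinearOrder F] [IsStrictOrderedRing F] [Field K] [Algebra F K]

theorem minpoly_eq_of_discrim_neg {x : K} {t m : F}
    (hx : x ^ 2 - algebraMap F K t * x + algebraMap F K m = 0) (hdisc : t ^ 2 < 4 * m) :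
    minpoly F x = X ^ 2 - C t * X + C m := by
  have hdeg : (X ^ 2 - C t * X + C m : F[X]).natDegree = 2 := by compute_degree!
  refine (minpoly.eq_of_irreducible_of_monic ?_ ?_ ?_).symm
  · refine irreducible_of_degree_le_three_of_not_isRoot (by simp [hdeg]) fun q hq => ?_
    simp only [IsRoot, eval_add, eval_sub, eval_mul, eval_pow, eval_X, eval_C] at hq
    nlinarith [sq_nonneg (2 * q - t)]
  · simpa using hx
  · monicity!

theorem Algebra.norm_eq_of_discrim_neg (hK : Module.finrank F K = 2) {x : K} {t m : F}
    (hx : x ^ 2 - algebraMap F K t * x + algebraMap F K m = 0) (hdisc : t ^ 2 < 4 * m) :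
    Algebra.norm F x = m := by
  have : FiniteDimensional F K := Module.finite_of_finrank_eq_succ hK
  have hint : IsIntegral F x := .of_finite F x
  have hmin := minpoly_eq_of_discrim_neg hx hdisc
  have hdeg : (minpoly F x).natDegree = 2 := by rw [hmin]; compute_degree!
  have hrank : Module.finrank F⟮x⟯ K = 1 := by
    have := Module.finrank_mul_finrank F F⟮x⟯ K
    rw [IntermediateField.adjoin.finrank hint, hdeg, hK] at this
    omega
  have hpb := PowerBasis.norm_gen_eq_coeff_zero_minpoly (IntermediateField.adjoin.powerBasis hint)
  rw [IntermediateField.adjoin.powerBasis_gen, IntermediateField.adjoin.powerBasis_dim,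
    IntermediateField.minpoly_gen, hdeg, hmin] at hpb
  rw [norm_eq_norm_adjoin F x, hrank, pow_one, hpb]
  simp

end Quadratic

theorem NumberField.RingOfIntegers.not_isUnit_of_discrim_neg {K : Type*} [Field K] [NumberField K]
    (hK : Module.finrank ℚ K = 2) {x : 𝓞 K} {t m : ℤ} (hx : x ^ 2 - t * x + m = 0)
    (hdisc : t ^ 2 < 4 * m) (hm : m ≠ 1) : ¬IsUnit x := by
  have hxK : (x : K) ^ 2 - algebraMap ℚ K t * x + algebraMap ℚ K m = 0 := by
    simpa using congrArg (algebraMap (𝓞 K) K) hx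
  rw [isUnit_iff_norm, RingOfIntegers.coe_norm,
    Algebra.norm_eq_of_discrim_neg hK hxK (by exact_mod_cast hdisc)]
  have hm0 : 0 < m := by nlinarith [sq_nonneg t]
  rw [abs_of_pos (by exact_mod_cast hm0)]
  exact_mod_cast hm

namespace Ideal

theorem mem_of_span_singleton_dvd_pow {R : Type*} [CommRing R] [IsDedekindDomain R]
    {P : Ideal R} (hP : P.IsPrime) (hP0 : P ≠ ⊥) {x : R} (hx : ¬IsUnit x) {k : ℕ}
    (h : span {x} ∣ P ^ k) : x ∈ P := by
  obtain ⟨i, -, hi⟩ := (dvd_prime_pow (prime_of_isPrime hP0 hP) k).mp h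
  rw [associated_iff_eq] at hi
  rcases i with _ | i
  · rw [pow_zero, one_eq_top, span_singleton_eq_top] at hi
    exact absurd hi hx
  · rw [← span_singleton_le_iff_mem, hi]
    exact pow_le_self i.succ_ne_zero

theorem span_singleton_ne_pow_of_mul_eq_pow {R : Type*} [CommRing R] [IsDedekindDomain R]
    {p x y : R} {n : ℕ} (hp : p ≠ 0) (hxy : x * y = p ^ n) (hx : ¬IsUnit x) (hy : ¬IsUnit y)
    (hcop : IsCoprime p (x + y)) {P : Ideal R} (hP : P.IsPrime) {e : ℕ} (he : e ≠ 0) :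
    span {p} ≠ P ^ e := by
  intro hpP
  have hP0 : P ≠ ⊥ := by
    rintro rfl
    rw [← zero_eq_bot, zero_pow he, zero_eq_bot, span_singleton_eq_bot] at hpP
    exact hp hpP
  have hxyP : span {x} * span {y} = P ^ (e * n) := by
    rw [span_singleton_mul_span_singleton, hxy, ← span_singleton_pow, hpP, ← pow_mul]
  have hxP := mem_of_span_singleton_dvd_pow hP hP0 hx (hxyP ▸ dvd_mul_right _ _)
  have hyP := mem_of_span_singleton_dvd_pow hP hP0 hy (hxyP ▸ dvd_mul_left _ _)
  have hpmem : p ∈ P := pow_le_self he (hpP ▸ mem_span_singleton_self p)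
  obtain ⟨u, v, huv⟩ := hcop
  refine hP.ne_top ((eq_top_iff_one P).mpr ?_)
  rw [← huv]
  exact add_mem (mul_mem_left _ _ hpmem) (mul_mem_left _ _ (add_mem hxP hyP))

variable {S : Type*} [CommRing S] [IsDedekindDomain S] [Module.Free ℤ S]

theorem isPrime_or_exists_eq_mul_of_absNorm_eq_sq {I : Ideal S} {p : ℕ} (hp : p.Prime)
    (hI : absNorm I = p ^ 2) :
    I.IsPrime ∨ ∃ P Q : Ideal S, P.IsPrime ∧ Q.IsPrime ∧ I = P * Q := by
  have hItop : I ≠ ⊤ := by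
    rintro rfl
    have := Nat.one_lt_pow two_ne_zero hp.one_lt
    rw [absNorm_top] at hI
    omega
  obtain ⟨P, hPmax, hIP⟩ := exists_le_maximal I hItop
  obtain ⟨J, rfl⟩ := dvd_iff_le.mpr hIP
  rw [map_mul] at hI
  obtain ⟨k, hk, hPk⟩ := (Nat.dvd_prime_pow hp).mp (hI ▸ dvd_mul_right _ _)
  have hk0 : k ≠ 0 := by
    rintro rfl
    exact hPmax.ne_top (absNorm_eq_one_iff.mp (by simpa using hPk))
  rw [hPk] at hI
  obtain rfl | rfl : k = 1 ∨ k = 2 := by omega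
  · have hJ : absNorm J = p := by
      rw [pow_one, sq] at hI
      exact Nat.eq_of_mul_eq_mul_left hp.pos hI
    exact Or.inr ⟨P, J, hPmax.isPrime, isPrime_of_irreducible_absNorm (hJ ▸ hp), rfl⟩
  · have hJ : J = ⊤ := by
      rw [← absNorm_eq_one_iff]
      exact (Nat.mul_eq_left (pow_ne_zero 2 hp.ne_zero)).mp hI
    exact Or.inl (by rw [hJ, mul_top]; exact hPmax.isPrime)

theorem exists_ne_mul_of_absNorm_eq_sq {I : Ideal S} {p : ℕ} (hp : p.Prime)
    (hI : absNorm I = p ^ 2) (hpow : ∀ P : Ideal S, P.IsPrime → ∀ e ≠ 0, I ≠ P ^ e) :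
    ∃ P Q : Ideal S, P ≠ Q ∧ P.IsPrime ∧ Q.IsPrime ∧ I = P * Q := by
  rcases isPrime_or_exists_eq_mul_of_absNorm_eq_sq hp hI with hprime | ⟨P, Q, hP, hQ, rfl⟩
  · exact absurd (pow_one I).symm (hpow I hprime 1 one_ne_zero)
  · refine ⟨P, Q, ?_, hP, hQ, rfl⟩
    rintro rfl
    exact hpow P hP 2 two_ne_zero (sq P).symm

end Ideal

theorem stmt_12_general (a p n c d : ℕ) (ha : Odd a) (hp : p.Prime)
    (hcop : Nat.Coprime a p) (hn1 : 1 < n)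
    (h : (a : ℤ) ^ 2 - 4 * p ^ n = -(c ^ 2 * d))
    (K : Type) [Field K] [NumberField K] (hdim : Module.finrank ℚ K = 2)
    (ω : K) (hω : ω ^ 2 = -(d : K)) :
    ∃ P Q : Ideal (𝓞 K), P ≠ Q ∧ P.IsPrime ∧ Q.IsPrime ∧
      Ideal.span {(p : 𝓞 K)} = P * Q := by
  have hdisc : (a : ℤ) ^ 2 < 4 * p ^ n := by
    have hodd : Odd ((a : ℤ) ^ 2 - 4 * p ^ n) :=
      ha.natCast.pow.sub_even ⟨2 * p ^ n, by ring⟩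
    have hne : (a : ℤ) ^ 2 - 4 * p ^ n ≠ 0 := fun h0 => by simp [h0] at hodd
    have : (0 : ℤ) ≤ c ^ 2 * d := by positivity
    omega
  have hα : ((a + c * ω) / 2 : K) ^ 2 - a * ((a + c * ω) / 2) + p ^ n = 0 := by
    have hK : (a : K) ^ 2 - 4 * p ^ n = -(c ^ 2 * d) := by
      exact_mod_cast congrArg (Int.cast : ℤ → K) h
    linear_combination ((c : K) ^ 2 / 4) * hω - (1 / 4 : K) * hK
  let x : 𝓞 K := ⟨(a + c * ω) / 2, X ^ 2 - C (a : ℤ) * X + C ((p : ℤ) ^ n), by monicity!,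
    by rw [← aeval_def]; simpa using hα⟩
  have hx : x ^ 2 - a * x + p ^ n = 0 := by
    ext
    simp only [map_add, map_sub, map_mul, map_pow, map_natCast, map_zero]
    exact hα
  have hnonunit (z : 𝓞 K) (hz : z ^ 2 - a * z + p ^ n = 0) : ¬IsUnit z :=
    RingOfIntegers.not_isUnit_of_discrim_neg hdim (t := a) (m := p ^ n) (by simpa using hz) hdisc
      (by exact_mod_cast (Nat.one_lt_pow (by omega) hp.one_lt).ne')
  refine Ideal.exists_ne_mul_of_absNorm_eq_sq hp ?_ fun P hP e he =>
    Ideal.span_singleton_ne_pow_of_mul_eq_pow (x := x) (y := a - x) (n := n)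
      (Nat.cast_ne_zero.mpr hp.ne_zero) (by linear_combination -hx) (hnonunit x hx)
      (hnonunit _ (by linear_combination hx)) ?_ hP he
  · rw [Ideal.absNorm_span_natCast, RingOfIntegers.rank, hdim]
  · rw [add_sub_cancel]
    simpa using (Nat.isCoprime_iff_coprime.mpr hcop.symm).map (Int.castRingHom (𝓞 K))

/-- Let `a ≥ 1` be odd, `p` a prime with `gcd(a,p) = 1`, `n > 1` odd, and
`a² - 4p^n = -c²d` with `d` squarefree. Then `p` splits in `K = ℚ(√-d)`: the ideal `(p)`
factors as a product of two distinct prime ideals of the ring of integers of `K`. -/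
theorem stmt_12 (a p n c d : ℕ) (ha0 : 0 < a) (ha : Odd a) (hp : p.Prime)
    (hcop : Nat.Coprime a p) (hn1 : 1 < n) (hn : Odd n) (hc : 0 < c) (hd : Squarefree d)
    (h : (a : ℤ) ^ 2 - 4 * p ^ n = -(c ^ 2 * d))
    (K : Type) [Field K] [NumberField K] (hdim : Module.finrank ℚ K = 2)
    (ω : K) (hω : ω ^ 2 = -(d : K)) :
    ∃ P Q : Ideal (𝓞 K), P ≠ Q ∧ P.IsPrime ∧ Q.IsPrime ∧
      Ideal.span {(p : 𝓞 K)} = P * Q :=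
  stmt_12_general a p n c d ha hp hcop hn1 h K hdim ω hω
end

section
/- Let n ≥ 3 be odd, p a prime, and suppose 1 - 4p^n = -c²d with d squarefree and d ≠ 3, c a positive integer. If the element (1 + c√(-d))/2 is not an ℓ-th power in the ring of integers of Q(√(-d)) for any prime ℓ dividing n, then the ideal class of a prime ideal above p in Q(√(-d)) has order exactly n; in particular n divides the class number of Q(√(-d)). -/
/-!
If the class of `𝔞` had order `m = n / t` with `t > 1`, then `𝔞 ^ m = (β)` and `α = u * β ^ t`
for a unit `u`. The unit group of `K = ℚ(√-d)` is finite, and an odd prime `ℓ` dividing its order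
would give a primitive `ℓ`-th root of unity of degree `ℓ - 1 ≤ 2`, hence `ℓ = 3` and `√-3 ∈ K`,
i.e. `d = 3`. So for a prime `ℓ ∣ t` (odd, as `n` is) the unit `u` is an `ℓ`-th power, and then so
is `α`.
-/

open NumberField Module
open scoped nonZeroDivisors

theorem Int.eq_of_rat_sq_mul_eq {a b : ℤ} (ha : Squarefree a) (hb : Squarefree b) {q : ℚ}
    (h : q ^ 2 * a = b) : a = b := by
  have hq : q.num ^ 2 * a = q.den ^ 2 * b := by
    rw [← Rat.num_div_den q] at h
    field_simp at h
    exact_mod_cast h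
  have hcop := Rat.isCoprime_num_den q
  have hnum : IsUnit q.num :=
    hb _ (sq q.num ▸ (hcop.pow (m := 2) (n := 2)).dvd_of_dvd_mul_left ⟨a, hq.symm⟩)
  have hden : IsUnit (q.den : ℤ) :=
    ha _ (sq (q.den : ℤ) ▸ (hcop.symm.pow (m := 2) (n := 2)).dvd_of_dvd_mul_left ⟨b, hq⟩)
  simpa [Int.isUnit_sq hnum, Int.isUnit_sq hden] using hq

section QuadraticField

variable {K : Type*} [Field K] [CharZero K]

theorem ratCast_ne_of_sq_eq_of_neg {x : K} {a : ℚ} (hx : x ^ 2 = a) (ha : a < 0) (q : ℚ) :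
    (q : K) ≠ x := by
  rintro rfl
  have : q ^ 2 = a := by exact_mod_cast hx
  nlinarith [sq_nonneg q]

theorem exists_ratCast_add_mul_eq_of_finrank_eq_two (hK : finrank ℚ K = 2) {x : K}
    (hx : ∀ q : ℚ, (q : K) ≠ x) (y : K) : ∃ s t : ℚ, (s : K) + t * x = y := by
  have hli : LinearIndependent ℚ ![(1 : K), x] :=
    (LinearIndependent.pair_iff' one_ne_zero).mpr fun q => by simpa [Rat.smul_def] using hx q
  have hy : y ∈ Submodule.span ℚ {1, x} := by
    rw [← Matrix.range_cons_cons_empty, hli.span_eq_top_of_card_eq_finrank (by simp [hK])]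
    exact Submodule.mem_top
  obtain ⟨s, t, hst⟩ := Submodule.mem_span_pair.mp hy
  exact ⟨s, t, by simpa [Rat.smul_def] using hst⟩

theorem exists_rat_sq_mul_eq_of_finrank_eq_two (hK : finrank ℚ K = 2) {x y : K} {a b : ℚ}
    (hx : x ^ 2 = a) (hy : y ^ 2 = b) (hxℚ : ∀ q : ℚ, (q : K) ≠ x)
    (hyℚ : ∀ q : ℚ, (q : K) ≠ y) :
    ∃ q : ℚ, q ^ 2 * a = b := by
  obtain ⟨s, t, rfl⟩ := exists_ratCast_add_mul_eq_of_finrank_eq_two hK hxℚ y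
  have hcoord : ((2 * s * t : ℚ) : K) * x = ((b - s ^ 2 - t ^ 2 * a : ℚ) : K) := by
    push_cast
    linear_combination hy - (t : K) ^ 2 * hx
  obtain rfl | rfl : s = 0 ∨ t = 0 := by
    by_contra! hst
    refine hxℚ ((b - s ^ 2 - t ^ 2 * a) / (2 * s * t)) ?_
    have h2st : ((2 * s * t : ℚ) : K) ≠ 0 := by
      exact_mod_cast mul_ne_zero (by simpa using hst.1) hst.2
    rw [Rat.cast_div, div_eq_iff h2st]
    linear_combination -hcoord
  · refine ⟨t, ?_⟩
    have : ((t ^ 2 * a : ℚ) : K) = b := by push_cast at hcoord ⊢; linear_combination hcoord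
    exact_mod_cast this
  · exact absurd (by simp) (hyℚ s)

theorem eq_of_sq_eq_neg_of_finrank_eq_two (hK : finrank ℚ K = 2) {d e : ℕ}
    (hd : Squarefree d) (he : Squarefree e) {x y : K} (hx : x ^ 2 = -(d : K))
    (hy : y ^ 2 = -(e : K)) : d = e := by
  have hx' : x ^ 2 = ((-d : ℚ) : K) := by push_cast; exact hx
  have hy' : y ^ 2 = ((-e : ℚ) : K) := by push_cast; exact hy
  have hneg {m : ℕ} (hm : Squarefree m) : (-m : ℚ) < 0 := by
    simpa using Nat.pos_of_ne_zero hm.ne_zero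
  obtain ⟨q, hq⟩ := exists_rat_sq_mul_eq_of_finrank_eq_two hK hx' hy'
    (ratCast_ne_of_sq_eq_of_neg hx' (hneg hd)) (ratCast_ne_of_sq_eq_of_neg hy' (hneg he))
  have hsq {m : ℕ} (hm : Squarefree m) : Squarefree (-(m : ℤ)) :=
    (Associated.neg_left (Associated.refl _)).squarefree_iff.mpr (Int.squarefree_natCast.mpr hm)
  have := Int.eq_of_rat_sq_mul_eq (hsq hd) (hsq he) (q := q) (by push_cast; exact hq)
  omega

end QuadraticField

theorem IsPrimitiveRoot.totient_le_finrank {K : Type*} [Field K] [CharZero K]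
    [FiniteDimensional ℚ K] {ζ : K} {k : ℕ} (hζ : IsPrimitiveRoot ζ k) :
    k.totient ≤ finrank ℚ K := by
  rcases k.eq_zero_or_pos with rfl | hk
  · simp
  simpa using
    hζ.lcm_totient_le_finrank hζ (by simpa using Polynomial.cyclotomic.irreducible_rat hk)

theorem IsPrimitiveRoot.two_mul_add_one_sq_eq_neg_three {K : Type*} [Field K] {ζ : K}
    (hζ : IsPrimitiveRoot ζ 3) : (2 * ζ + 1) ^ 2 = -3 := by
  have := hζ.geom_sum_eq_zero (by norm_num)
  simp only [Finset.sum_range_succ, Finset.sum_range_zero] at this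
  linear_combination 4 * this

theorem isTotallyComplex_of_sq_eq_neg {K : Type*} [Field K] [NumberField K] {x : K} {a : ℚ}
    (hx : x ^ 2 = a) (ha : a < 0) : IsTotallyComplex K := by
  refine ⟨fun w => InfinitePlace.not_isReal_iff_isComplex.mp fun hw => ?_⟩
  have hψ : (InfinitePlace.isReal_iff.mp hw).embedding x ^ 2 = a := by
    rw [← map_pow, hx, map_ratCast]
  have : (a : ℝ) < 0 := by exact_mod_cast ha
  nlinarith [sq_nonneg ((InfinitePlace.isReal_iff.mp hw).embedding x)]

namespace NumberField.Units

variable {K : Type*} [Field K] [NumberField K]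

theorem rank_eq_zero_of_finrank_eq_two [IsTotallyComplex K] (hK : finrank ℚ K = 2) :
    rank K = 0 := by
  have := IsTotallyComplex.finrank (K := K)
  rw [rank, InfinitePlace.card_eq_nrRealPlaces_add_nrComplexPlaces,
    IsTotallyComplex.nrRealPlaces_eq_zero]
  omega

theorem torsion_eq_top_of_rank_eq_zero (h : rank K = 0) : torsion K = ⊤ := by
  have : IsEmpty (Fin (rank K)) := h ▸ Fin.isEmpty'
  simpa [Set.range_eq_empty] using closure_fundSystem_sup_torsion_eq_top K

theorem exists_pow_eq_of_rank_eq_zero (h : rank K = 0) {ℓ : ℕ}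
    (hℓ : (torsionOrder K).Coprime ℓ) (u : (𝓞 K)ˣ) : ∃ v : (𝓞 K)ˣ, v ^ ℓ = u := by
  have hu : u ∈ torsion K := torsion_eq_top_of_rank_eq_zero h ▸ Subgroup.mem_top u
  exact ⟨(powCoprime hℓ).symm ⟨u, hu⟩,
    congrArg Subtype.val ((powCoprime hℓ).apply_symm_apply ⟨u, hu⟩)⟩

theorem exists_isPrimitiveRoot_of_prime_dvd_torsionOrder {ℓ : ℕ} (hℓ : ℓ.Prime)
    (h : ℓ ∣ torsionOrder K) : ∃ ζ : K, IsPrimitiveRoot ζ ℓ := by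
  have : Fact ℓ.Prime := ⟨hℓ⟩
  obtain ⟨ζ, hζ⟩ := exists_prime_orderOf_dvd_card' ℓ h
  let f : torsion K →* K :=
    (algebraMap (𝓞 K) K : 𝓞 K →* K).comp ((Units.coeHom (𝓞 K)).comp (torsion K).subtype)
  have hf : Function.Injective f := fun x y hxy =>
    Subtype.ext (Units.ext (RingOfIntegers.coe_injective hxy))
  exact ⟨f ζ, hζ ▸ (IsPrimitiveRoot.orderOf ζ).map_of_injective hf⟩

theorem exists_pow_eq_of_sq_eq_neg (hK : finrank ℚ K = 2) {d : ℕ} (hd : Squarefree d)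
    (hd3 : d ≠ 3) {ω : K} (hω : ω ^ 2 = -(d : K)) {ℓ : ℕ} (hℓ : ℓ.Prime) (hℓodd : Odd ℓ)
    (u : (𝓞 K)ˣ) : ∃ v : (𝓞 K)ˣ, v ^ ℓ = u := by
  have hω' : ω ^ 2 = ((-d : ℚ) : K) := by push_cast; exact hω
  have := isTotallyComplex_of_sq_eq_neg hω' (by simpa using Nat.pos_of_ne_zero hd.ne_zero)
  refine exists_pow_eq_of_rank_eq_zero (rank_eq_zero_of_finrank_eq_two hK)
    (hℓ.coprime_iff_not_dvd.mpr fun hdvd => hd3 ?_).symm u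
  obtain ⟨ζ, hζ⟩ := exists_isPrimitiveRoot_of_prime_dvd_torsionOrder hℓ hdvd
  obtain rfl : ℓ = 3 := by
    have := hζ.totient_le_finrank
    rw [Nat.totient_prime hℓ, hK] at this
    have := hℓ.two_le
    obtain ⟨k, rfl⟩ := hℓodd
    omega
  exact eq_of_sq_eq_neg_of_finrank_eq_two hK hd Nat.prime_three.squarefree hω
    (by simpa using hζ.two_mul_add_one_sq_eq_neg_three)

end NumberField.Units

theorem ClassGroup.exists_associated_pow_of_span_eq_pow {R : Type*} [CommRing R]
    [IsDedekindDomain R] {I : (Ideal R)⁰} {m t : ℕ} (hm : ClassGroup.mk0 I ^ m = 1)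
    {α : R} (hα : Ideal.span {α} = (I : Ideal R) ^ (m * t)) :
    ∃ β : R, Associated (β ^ t) α := by
  rw [← map_pow] at hm
  obtain ⟨β, hβ⟩ := ((ClassGroup.mk0_eq_one_iff (I ^ m).2).mp hm).principal
  refine ⟨β, Ideal.span_singleton_eq_span_singleton.mp ?_⟩
  rw [← Ideal.span_singleton_pow, ← Ideal.submodule_span_eq, ← hβ, SubmonoidClass.coe_pow,
    ← pow_mul, hα]

theorem ClassGroup.orderOf_mk0_eq_of_span_eq_pow {R : Type*} [CommRing R]
    [IsDedekindDomain R] {n : ℕ} {I : (Ideal R)⁰} {α : R} (hI : Ideal.span {α} = (I : Ideal R) ^ n)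
    (hunit : ∀ ℓ : ℕ, ℓ.Prime → ℓ ∣ n → ∀ u : Rˣ, ∃ v : Rˣ, v ^ ℓ = u)
    (hα : ∀ ℓ : ℕ, ℓ.Prime → ℓ ∣ n → ¬ ∃ β : R, α = β ^ ℓ) :
    orderOf (ClassGroup.mk0 I) = n := by
  have hn : ClassGroup.mk0 I ^ n = 1 := by
    rw [← map_pow, ClassGroup.mk0_eq_one_iff]
    exact ⟨⟨α, hI.symm⟩⟩
  obtain ⟨t, ht⟩ := orderOf_dvd_of_pow_eq_one hn
  by_contra hne
  obtain ⟨ℓ, hℓ, s, rfl⟩ : ∃ ℓ, ℓ.Prime ∧ ℓ ∣ t :=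
    Nat.exists_prime_and_dvd (by rintro rfl; simp [ht] at hne)
  obtain ⟨β, u, hβ⟩ := exists_associated_pow_of_span_eq_pow (pow_orderOf_eq_one _) (ht ▸ hI)
  have hℓn : ℓ ∣ n := ht ▸ (Dvd.intro s rfl).mul_left _
  obtain ⟨v, rfl⟩ := hunit ℓ hℓ hℓn u
  refine hα ℓ hℓ hℓn ⟨β ^ s * v, ?_⟩
  rw [← hβ, mul_pow, ← pow_mul, Units.val_pow_eq_pow_val, mul_comm s]

theorem stmt_14_general (n d : ℕ) (hn : Odd n) (hd : Squarefree d) (hd3 : d ≠ 3)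
    (K : Type) [Field K] [NumberField K] (hdim : Module.finrank ℚ K = 2)
    (ω : K) (hω : ω ^ 2 = -(d : K))
    (α : 𝓞 K)
    (hpow : ∀ ℓ : ℕ, ℓ.Prime → ℓ ∣ n → ¬ ∃ β : 𝓞 K, α = β ^ ℓ)
    (𝔞 : Ideal (𝓞 K)) (h𝔞0 : 𝔞 ∈ nonZeroDivisors (Ideal (𝓞 K)))
    (h𝔞 : Ideal.span {α} = 𝔞 ^ n) :
    orderOf (ClassGroup.mk0 (⟨𝔞, h𝔞0⟩ : nonZeroDivisors (Ideal (𝓞 K)))) = n ∧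
      n ∣ NumberField.classNumber K := by
  have horder : orderOf (ClassGroup.mk0 (⟨𝔞, h𝔞0⟩ : (Ideal (𝓞 K))⁰)) = n :=
    ClassGroup.orderOf_mk0_eq_of_span_eq_pow h𝔞
      (fun ℓ hℓ hℓn => Units.exists_pow_eq_of_sq_eq_neg hdim hd hd3 hω hℓ (hn.of_dvd_nat hℓn))
      hpow
  exact ⟨horder, horder ▸ orderOf_dvd_card⟩

/-- Let `n ≥ 3` be odd, `p` a prime, `1 - 4p^n = -c²d` with `d` squarefree, `d ≠ 3`,
`c > 0`. If `α = (1 + c√-d)/2` is not an `ℓ`-th power in `𝓞 K` (`K = ℚ(√-d)`) for any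
prime `ℓ ∣ n`, then the class of a prime ideal `𝔞` above `p` with `(α) = 𝔞^n` has order
exactly `n` in the class group; in particular `n` divides the class number of `K`. -/
theorem stmt_14 (n p c d : ℕ) (hn3 : 3 ≤ n) (hn : Odd n) (hp : p.Prime)
    (hc : 0 < c) (hd : Squarefree d) (hd3 : d ≠ 3)
    (h : (1 : ℤ) - 4 * p ^ n = -(c ^ 2 * d))
    (K : Type) [Field K] [NumberField K] (hdim : Module.finrank ℚ K = 2)
    (ω : K) (hω : ω ^ 2 = -(d : K))
    (α : 𝓞 K) (hα : (α : K) = (1 + (c : K) * ω) / 2)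
    (hpow : ∀ ℓ : ℕ, ℓ.Prime → ℓ ∣ n → ¬ ∃ β : 𝓞 K, α = β ^ ℓ)
    (𝔞 : Ideal (𝓞 K)) (h𝔞0 : 𝔞 ∈ nonZeroDivisors (Ideal (𝓞 K)))
    (h𝔞prime : 𝔞.IsPrime) (hp𝔞 : (p : 𝓞 K) ∈ 𝔞)
    (h𝔞 : Ideal.span {α} = 𝔞 ^ n) :
    orderOf (ClassGroup.mk0 (⟨𝔞, h𝔞0⟩ : nonZeroDivisors (Ideal (𝓞 K)))) = n ∧
      n ∣ NumberField.classNumber K :=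
  stmt_14_general n d hn hd hd3 K hdim ω hω α hpow 𝔞 h𝔞0 h𝔞
end
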